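/- Let C be a nodal curve of genus g ≥ 2 and e_bar a multidegree of total degree e. If e_bar is semistable at every nonempty connected proper subcurve Y containing a fixed component X, then e_bar is semistable at every nonempty connected proper subcurve of C. -/

import Mathlib

open Finset

/-- An abstract (combinatorial) model of a nodal curve: a finite set of irreducible
components `V` (with geometric genus `w v`), and a finite set of nodes `N`, each node
lying on the (unordered pair of) components recorded by `ends`. -/
structure NodalCurve where
  V : Type
  N : Type
  [instFV : Fintype V]
  [instDV : DecidableEq V]
  [instFN : Fintype N]
  [instDN : DecidableEq N]
  ends : N → Sym2 V
  w : V → ℕ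

namespace NodalCurve

variable (C : NodalCurve)

instance : Fintype C.V := C.instFV
instance : DecidableEq C.V := C.instDV
instance : Fintype C.N := C.instFN
instance : DecidableEq C.N := C.instDN

/-- The dual graph of the curve (as a simple graph on the components). -/
def graph : SimpleGraph C.V :=
  SimpleGraph.fromRel (fun u v => ∃ n, C.ends n = s(u, v))

/-- The number of branches (ends) of the node `n` lying on the subcurve `S`. -/
def endsIn (S : Finset C.V) (n : C.N) : ℕ :=
  Sym2.lift ⟨fun a b => (if a ∈ S then 1 else 0) + (if b ∈ S then 1 else 0),
    fun _ _ => add_comm _ _⟩ (C.ends n)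

/-- `k S = #(Y ∩ Y')`: the number of nodes where the subcurve `S` meets its complement. -/
def k (S : Finset C.V) : ℕ := (univ.filter fun n => C.endsIn S n = 1).card

/-- nodes both of whose branches lie on `S`. -/
def internalNodes (S : Finset C.V) : ℕ := (univ.filter fun n => C.endsIn S n = 2).card

/-- The (arithmetic) genus of the curve. -/
def genus : ℤ :=
  ∑ v, (C.w v : ℤ) + (Fintype.card C.N : ℤ) - (Fintype.card C.V : ℤ) + 1

/-- The genus `1 - χ(O_Y)` of a (connected) subcurve with components `S`. -/
def genusSub (S : Finset C.V) : ℤ :=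
  ∑ v ∈ S, (C.w v : ℤ) + (C.internalNodes S : ℤ) - (S.card : ℤ) + 1

/-- `χ(O_Y)` for the subcurve `Y` with components `S`. -/
def chiO (S : Finset C.V) : ℤ :=
  (S.card : ℤ) - ∑ v ∈ S, (C.w v : ℤ) - (C.internalNodes S : ℤ)

/-- The degree of `ω_C` restricted to the subcurve with components `S`. -/
def degω (S : Finset C.V) : ℤ :=
  ∑ v ∈ S, (2 * (C.w v : ℤ) - 2) + ∑ n, (C.endsIn S n : ℤ)

/-- Connectedness of the subcurve with components `S`. -/
def connectedSub (S : Finset C.V) : Prop := (C.graph.induce (S : Set C.V)).Connected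

/-- Connectedness of the curve. -/
def Conn : Prop := C.graph.Connected

/-- The curve is of compact type: every node is separating, i.e. the dual graph
(with its multiple edges and loops) is a tree. -/
def CompactType : Prop :=
  Function.Injective C.ends ∧ (∀ n, ¬ (C.ends n).IsDiag) ∧ C.graph.IsTree

/-- Deligne–Mumford stability. -/
def Stable : Prop := ∀ v, 0 < 2 * (C.w v : ℤ) - 2 + ∑ n, (C.endsIn {v} n : ℤ)

/-- A tail: a subcurve meeting its complement in exactly one node. -/
def isTail (S : Finset C.V) : Prop := C.k S = 1

/-- The degree `d_Y` of a multidegree `e` on the subcurve with components `S`. -/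
def degSub (e : C.V → ℤ) (S : Finset C.V) : ℤ := ∑ v ∈ S, e v

/-- The total degree of a multidegree. -/
def totalDeg (e : C.V → ℤ) : ℤ := ∑ v, e v

/-- Semistability (w.r.t. the canonical polarization) at the subcurve `S`:
`|d_Y - d·deg(ω_C|_Y)/(2g-2)| ≤ k_Y/2`. -/
def semistableAt (e : C.V → ℤ) (S : Finset C.V) : Prop :=
  |(C.degSub e S : ℚ) - (C.totalDeg e : ℚ) * (C.degω S : ℚ) / (2 * (C.genus : ℚ) - 2)|
    ≤ (C.k S : ℚ) / 2

/-- The strict lower inequality of quasistability at the subcurve `S`: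
`d_Y - d·deg(ω_C|_Y)/(2g-2) > -k_Y/2`. -/
def quasistableLowAt (e : C.V → ℤ) (S : Finset C.V) : Prop :=
  -((C.k S : ℚ) / 2) <
    (C.degSub e S : ℚ) - (C.totalDeg e : ℚ) * (C.degω S : ℚ) / (2 * (C.genus : ℚ) - 2)

/-- A semistable multidegree. -/
def semistable (e : C.V → ℤ) : Prop :=
  ∀ S : Finset C.V, S.Nonempty → S ≠ univ → C.semistableAt e S

/-- An `X`-quasistable multidegree. -/
def Xquasistable (X : C.V) (e : C.V → ℤ) : Prop :=
  C.semistable e ∧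
    ∀ S : Finset C.V, S.Nonempty → S ≠ univ → X ∈ S → C.quasistableLowAt e S

/-- A `d̄`-big tail: `d_Z·deg(ω_C) - d·deg(ω_C|_Z) < 2g_Z - g`. -/
def isBigTail (e : C.V → ℤ) (S : Finset C.V) : Prop :=
  C.isTail S ∧
    C.degSub e S * (2 * C.genus - 2) - C.totalDeg e * C.degω S
      < 2 * C.genusSub S - C.genus

/-- `S` is (the set of components of) a connected component of the complement `X'`
of the irreducible component `x`. -/
def complComponent (x : C.V) (S : Finset C.V) : Prop :=
  x ∉ S ∧ S.Nonempty ∧ C.connectedSub S ∧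
    ∀ u ∈ S, ∀ v : C.V, C.graph.Adj u v → v ≠ x → v ∈ S

/-- `T` is (the set of components of) a connected component of the subcurve `S`. -/
def subComponent (S T : Finset C.V) : Prop :=
  T ⊆ S ∧ T.Nonempty ∧ C.connectedSub T ∧
    ∀ u ∈ T, ∀ v ∈ S, C.graph.Adj u v → v ∈ T

/-- A central component: every connected component `Z` of `X'` has `g_Z < g/2`. -/
def central (x : C.V) : Prop :=
  ∀ S : Finset C.V, C.complComponent x S → 2 * C.genusSub S < C.genus

/-- A semicentral component: every connected component `Z` of `X'` has `g_Z ≤ g/2`. -/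
def semicentral (x : C.V) : Prop :=
  ∀ S : Finset C.V, C.complComponent x S → 2 * C.genusSub S ≤ C.genus

end NodalCurve

/-!
Let `S` be connected with `X ∉ S`, and let `Y` be the connected component of `Sᶜ` through `X`.
No node joins `Y` to `R = Sᶜ \ Y`, so both `d_Y - d·deg(ω_C|_Y)/(2g-2)` and `k_Y` are additive
on `Sᶜ = Y ∪ R`, and semistability at `Sᶜ`, equivalently at `S`, follows from semistability at
`Y` and at `R`. The first is a hypothesis; for the second pass to the complement `S ∪ Y`, which
contains `X` and is connected because `C` is connected and so `Y` is adjacent to `S`.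
-/
namespace SimpleGraph

variable {V : Type*} {G : SimpleGraph V}

theorem Preconnected.exists_adj_mem_not_mem (hG : G.Preconnected) {Y : Set V} {x y : V}
    (hx : x ∈ Y) (hy : y ∉ Y) : ∃ u ∈ Y, ∃ v ∉ Y, G.Adj u v := by
  obtain ⟨d, -, hd₁, hd₂⟩ := (hG x y).some.exists_boundary_dart Y hx hy
  exact ⟨d.fst, hd₁, d.snd, hd₂, d.adj⟩

theorem exists_induce_connected_adj_closed [DecidableEq V] {W : Finset V} {x : V}
    (hx : x ∈ W) : ∃ Y ⊆ W, x ∈ Y ∧ (G.induce (Y : Set V)).Connected ∧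
      ∀ u ∈ Y, ∀ v ∈ W, G.Adj u v → v ∈ Y := by
  classical
  obtain ⟨Y, hY, hYmax⟩ := (W.powerset.filter fun Y : Finset V =>
    x ∈ Y ∧ (G.induce (Y : Set V)).Connected).exists_maximal
      ⟨{x}, by simpa [hx] using Connected.of_subsingleton⟩
  simp only [mem_filter, mem_powerset] at hY hYmax
  obtain ⟨hYW, hxY, hYconn⟩ := hY
  refine ⟨Y, hYW, hxY, hYconn, fun u hu v hv huv => ?_⟩
  have hconn : (G.induce ((Y ∪ {u, v} : Finset V) : Set V)).Connected := by
    rw [coe_union, coe_pair]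
    exact induce_union_connected hYconn.preconnected
      (induce_pair_connected_of_adj huv).preconnected ⟨u, hu, Set.mem_insert _ _⟩
  have hle := hYmax ⟨union_subset hYW (insert_subset (hYW hu) (singleton_subset_iff.2 hv)),
    mem_union_left _ hxY, hconn⟩ subset_union_left
  exact hle (mem_union_right _ (by simp))

end SimpleGraph

namespace NodalCurve

variable (C : NodalCurve)

theorem graph_adj_of_ends {n : C.N} {a b : C.V} (hn : C.ends n = s(a, b)) (hab : a ≠ b) :
    C.graph.Adj a b := by
  rw [graph, SimpleGraph.fromRel_adj]
  exact ⟨hab, Or.inl ⟨n, hn⟩⟩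

theorem endsIn_eq_of_ends_eq {n : C.N} {a b : C.V} (hn : C.ends n = s(a, b)) (S : Finset C.V) :
    C.endsIn S n = (if a ∈ S then 1 else 0) + (if b ∈ S then 1 else 0) := by
  rw [endsIn, hn, Sym2.lift_mk]

theorem exists_ends_eq (n : C.N) : ∃ a b, C.ends n = s(a, b) :=
  Sym2.ind (fun a b => ⟨a, b, rfl⟩) (C.ends n)

theorem endsIn_union {S T : Finset C.V} (hST : Disjoint S T) (n : C.N) :
    C.endsIn (S ∪ T) n = C.endsIn S n + C.endsIn T n := by
  obtain ⟨a, b, hn⟩ := C.exists_ends_eq n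
  simp only [C.endsIn_eq_of_ends_eq hn, mem_union]
  have ha : a ∈ S → a ∉ T := fun h => disjoint_left.1 hST h
  have hb : b ∈ S → b ∉ T := fun h => disjoint_left.1 hST h
  split_ifs <;> tauto

theorem endsIn_univ (n : C.N) : C.endsIn univ n = 2 := by
  obtain ⟨a, b, hn⟩ := C.exists_ends_eq n
  simp [C.endsIn_eq_of_ends_eq hn]

theorem endsIn_eq_zero_or_of_adj_closed {W Y : Finset C.V}
    (hY : ∀ u ∈ Y, ∀ v ∈ W, C.graph.Adj u v → v ∈ Y) (n : C.N) :
    C.endsIn Y n = 0 ∨ C.endsIn (W \ Y) n = 0 := by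
  obtain ⟨a, b, hn⟩ := C.exists_ends_eq n
  have closed : ∀ {u v}, C.ends n = s(u, v) → u ∈ Y → v ∈ W → v ∈ Y :=
    fun {u v} h hu hv => (eq_or_ne u v).elim (· ▸ hu)
      fun huv => hY u hu v hv (C.graph_adj_of_ends h huv)
  have hab := closed hn
  have hba := closed (hn.trans Sym2.eq_swap)
  simp only [C.endsIn_eq_of_ends_eq hn, mem_sdiff]
  split_ifs <;> tauto

theorem k_union {S T : Finset C.V} (hST : Disjoint S T)
    (hsep : ∀ n, C.endsIn S n = 0 ∨ C.endsIn T n = 0) :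
    C.k (S ∪ T) = C.k S + C.k T := by
  rw [k, k, k, ← card_union_of_disjoint]
  · congr 1
    ext n
    simp only [mem_filter, mem_univ, true_and, mem_union, C.endsIn_union hST]
    have := hsep n
    omega
  · refine disjoint_filter.2 fun n _ hS hT => ?_
    have := hsep n
    omega

theorem degω_union {S T : Finset C.V} (hST : Disjoint S T) :
    C.degω (S ∪ T) = C.degω S + C.degω T := by
  simp only [degω, sum_union hST, C.endsIn_union hST, Nat.cast_add, sum_add_distrib]
  ring

theorem degω_univ : C.degω univ = 2 * C.genus - 2 := by
  simp only [degω, genus, C.endsIn_univ, sum_sub_distrib, ← mul_sum, sum_const, card_univ]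
  push_cast
  ring

def deviation (e : C.V → ℤ) (S : Finset C.V) : ℚ :=
  (C.degSub e S : ℚ) - (C.totalDeg e : ℚ) * (C.degω S : ℚ) / (2 * (C.genus : ℚ) - 2)

theorem semistableAt_iff (e : C.V → ℤ) (S : Finset C.V) :
    C.semistableAt e S ↔ |C.deviation e S| ≤ (C.k S : ℚ) / 2 := Iff.rfl

theorem deviation_union (e : C.V → ℤ) {S T : Finset C.V} (hST : Disjoint S T) :
    C.deviation e (S ∪ T) = C.deviation e S + C.deviation e T := by
  simp only [deviation, degSub, sum_union hST, C.degω_union hST]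
  push_cast
  ring

theorem deviation_univ (hg : C.genus ≠ 1) (e : C.V → ℤ) : C.deviation e univ = 0 := by
  have : (2 * (C.genus : ℚ) - 2) ≠ 0 := by
    rw [sub_ne_zero]; exact_mod_cast fun h => hg (by omega)
  rw [deviation, C.degω_univ, degSub, totalDeg]
  push_cast
  rw [mul_div_cancel_right₀ _ this, sub_self]

theorem deviation_empty (e : C.V → ℤ) : C.deviation e ∅ = 0 := by
  have := C.deviation_union e (disjoint_empty_left (∅ : Finset C.V))
  rw [empty_union] at this
  linarith

theorem deviation_compl (hg : C.genus ≠ 1) (e : C.V → ℤ) (S : Finset C.V) :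
    C.deviation e Sᶜ = -C.deviation e S := by
  have := C.deviation_union e (disjoint_compl_right (a := S))
  rw [union_compl, C.deviation_univ hg] at this
  linarith

theorem k_compl (S : Finset C.V) : C.k Sᶜ = C.k S := by
  have h := C.endsIn_union (disjoint_compl_right (a := S))
  simp only [union_compl, endsIn_univ] at h
  simp only [k]
  congr 1
  ext n
  simp only [mem_filter, mem_univ, true_and]
  have := h n
  omega

theorem semistableAt_compl_iff (hg : C.genus ≠ 1) (e : C.V → ℤ) (S : Finset C.V) :
    C.semistableAt e Sᶜ ↔ C.semistableAt e S := by
  rw [semistableAt_iff, semistableAt_iff, C.deviation_compl hg, abs_neg, C.k_compl]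

theorem semistableAt_empty (e : C.V → ℤ) : C.semistableAt e ∅ := by
  rw [semistableAt_iff, C.deviation_empty, abs_zero]
  positivity

theorem semistableAt_union (e : C.V → ℤ) {S T : Finset C.V} (hST : Disjoint S T)
    (hsep : ∀ n, C.endsIn S n = 0 ∨ C.endsIn T n = 0)
    (hS : C.semistableAt e S) (hT : C.semistableAt e T) : C.semistableAt e (S ∪ T) := by
  rw [semistableAt_iff] at *
  rw [C.deviation_union e hST, C.k_union hST hsep]
  push_cast
  linarith [abs_add_le (C.deviation e S) (C.deviation e T)]

end NodalCurve

open Finset in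
/-- if a multidegree is semistable at every nonempty connected proper
subcurve containing the component `X`, then it is semistable at every nonempty connected
proper subcurve. -/
theorem semistable_of_semistable_through_X (C : NodalCurve) (hconn : C.Conn)
    (hg : 2 ≤ C.genus) (X : C.V) (e : C.V → ℤ)
    (h : ∀ S : Finset C.V, S.Nonempty → S ≠ univ → C.connectedSub S → X ∈ S →
      C.semistableAt e S) :
    ∀ S : Finset C.V, S.Nonempty → S ≠ univ → C.connectedSub S →
      C.semistableAt e S := by
  intro S ⟨s, hs⟩ hSu hS
  by_cases hXS : X ∈ S
  · exact h S ⟨s, hs⟩ hSu hS hXS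
  have hg1 : C.genus ≠ 1 := by omega
  obtain ⟨Y, hYS, hXY, hY, hYclosed⟩ :=
    C.graph.exists_induce_connected_adj_closed (mem_compl.2 hXS)
  have hsY : s ∉ Y := fun hsY => mem_compl.1 (hYS hsY) hs
  have hYss : C.semistableAt e Y := h Y ⟨X, hXY⟩ (fun hu => hsY (hu ▸ mem_univ s)) hY hXY
  have hSY : C.connectedSub (S ∪ Y) := by
    obtain ⟨u, hu, v, hv, huv⟩ := hconn.preconnected.exists_adj_mem_not_mem hXY hsY
    have hvS : v ∈ S := by_contra fun hvS => hv (hYclosed u hu v (mem_compl.2 hvS) huv)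
    rw [NodalCurve.connectedSub, coe_union, Set.union_comm]
    exact SimpleGraph.connected_induce_union hY.preconnected hS.preconnected hu hvS huv
  have hY' : C.semistableAt e (Sᶜ \ Y) := by
    rcases (Sᶜ \ Y).eq_empty_or_nonempty with hempty | ⟨t, ht⟩
    · exact hempty ▸ C.semistableAt_empty e
    · have hcompl : (Sᶜ \ Y)ᶜ = S ∪ Y := by ext; simp; tauto
      have hSYu : S ∪ Y ≠ univ := fun hu => (mem_compl.1 (hcompl ▸ hu ▸ mem_univ t)) ht
      rw [← C.semistableAt_compl_iff hg1, hcompl]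
      exact h _ ⟨s, mem_union_left _ hs⟩ hSYu hSY (mem_union_right _ hXY)
  rw [← C.semistableAt_compl_iff hg1, ← union_sdiff_of_subset hYS]
  exact C.semistableAt_union e disjoint_sdiff (C.endsIn_eq_zero_or_of_adj_closed hYclosed) hYss hY'
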